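/- arXiv:math/0703363 — 7 statements merged into one kernel-verified Lean document; each statement's English description precedes it below -/
import Mathlib

section
/- Let G be a finite group of odd order and c an automorphism of G of order 2. Let G⁺ = {g ∈ G : c(g) = g} and G⁻ = {g ∈ G : c(g) = g⁻¹}. Then |G| = |G⁺| · |G⁻|. -/
open scoped Classical

/-- Let `G` be a finite group of odd order and `c` an automorphism of `G` with `c² = id`.
Then `|G| = |G⁺| · |G⁻|`, where `G⁺` is the set of fixed points of `c` and
`G⁻` the set of elements inverted by `c`. -/
theorem stmt_0 {G : Type*} [Group G] [Fintype G]
    (hodd : Odd (Fintype.card G))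
    (c : G ≃* G) (hc : ∀ g, c (c g) = g) :
    Fintype.card G =
      Fintype.card {g : G // c g = g} * Fintype.card {g : G // c g = g⁻¹} := by
  obtain ⟨m, hm⟩ := hodd
  -- square root lemma
  have hsq : ∀ b : G, (b ^ 2) ^ (m + 1) = b := by
    intro b
    rw [← pow_mul]
    have : 2 * (m + 1) = Fintype.card G + 1 := by omega
    rw [this, pow_succ, pow_card_eq_one, one_mul]
  have hx : ∀ g : G, c ((c g)⁻¹ * g) = ((c g)⁻¹ * g)⁻¹ := by
    intro g
    simp [hc, mul_comm]
  have hbinv : ∀ g : G, c (((c g)⁻¹ * g) ^ (m + 1)) = (((c g)⁻¹ * g) ^ (m + 1))⁻¹ := by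
    intro g
    rw [map_pow, hx, inv_pow]
  have e : G ≃ {g : G // c g = g} × {g : G // c g = g⁻¹} :=
    { toFun := fun g =>
        (⟨g * (((c g)⁻¹ * g) ^ (m + 1))⁻¹, by
          have hb := hbinv g
          have hbb : (((c g)⁻¹ * g) ^ (m + 1)) ^ 2 = (c g)⁻¹ * g := by
            rw [← pow_mul, mul_comm (m+1) 2, pow_mul, hsq]
          rw [map_mul, map_inv, hb, inv_inv]
          have : c g * ((c g)⁻¹ * g) ^ (m + 1) * (((c g)⁻¹ * g) ^ (m + 1)) = g := by
            rw [mul_assoc, ← sq, hbb, ← mul_assoc, mul_inv_cancel, one_mul]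
          calc c g * ((c g)⁻¹ * g) ^ (m + 1)
              = c g * ((c g)⁻¹ * g) ^ (m + 1) * (((c g)⁻¹ * g) ^ (m + 1))
                * (((c g)⁻¹ * g) ^ (m + 1))⁻¹ := by group
            _ = g * (((c g)⁻¹ * g) ^ (m + 1))⁻¹ := by rw [this]⟩,
         ⟨((c g)⁻¹ * g) ^ (m + 1), hbinv g⟩),
      invFun := fun p => p.1.1 * p.2.1,
      left_inv := fun g => by simp,
      right_inv := fun p => by
        obtain ⟨⟨a, ha⟩, ⟨b, hb⟩⟩ := p
        have hxab : (c (a * b))⁻¹ * (a * b) = b ^ 2 := by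
          rw [map_mul, ha, hb, mul_inv_rev, inv_inv, sq]
          group
        ext
        · simp only
          rw [hxab, hsq]
          group
        · simp only
          rw [hxab, hsq] }
  rw [Fintype.card_congr e, Fintype.card_prod]
end

section
/- Let G be a finite group of odd order and c an automorphism of G with c² = id. Let G⁺ be the fixed-point subgroup and G⁻ = {g ∈ G : c(g) = g⁻¹}. Then every element of G can be written as a product of an element of G⁺ and an element of G⁻, i.e., G = G⁺ · G⁻, and also G = G⁻ · G⁺. -/
private lemma sq_bij {G : Type*} [Group G] [Fintype G]
    (hodd : Odd (Fintype.card G)) : Function.Bijective (fun g : G => g ^ 2) := by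
  have h : Nat.Coprime 2 (Nat.card G) := by
    rw [Nat.prime_two.coprime_iff_not_dvd, Nat.card_eq_fintype_card]
    intro h2
    exact (Nat.not_even_iff_odd.mpr hodd) ((even_iff_two_dvd).mpr h2)
  exact (powCoprime h.symm).bijective

/-- Let `G` be a finite group of odd order and `c` an automorphism of `G` with `c² = id`.
Then `G = G⁺ · G⁻` and `G = G⁻ · G⁺`. -/
theorem stmt_1 {G : Type*} [Group G] [Fintype G]
    (hodd : Odd (Fintype.card G))
    (c : G ≃* G) (hc : ∀ g, c (c g) = g) :
    ∀ g : G, (∃ a b : G, c a = a ∧ c b = b⁻¹ ∧ g = a * b) ∧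
      (∃ a b : G, c a = a ∧ c b = b⁻¹ ∧ g = b * a) := by
  obtain ⟨hinj, hsurj⟩ := sq_bij hodd
  intro g
  constructor
  · obtain ⟨b, hb⟩ := hsurj ((c g)⁻¹ * g)
    simp only at hb
    have hcb : c b = b⁻¹ := by
      apply hinj
      show (c b) ^ 2 = (b⁻¹) ^ 2
      rw [← map_pow, hb, map_mul, map_inv, hc, inv_pow, hb]
      group
    refine ⟨g * b⁻¹, b, ?_, hcb, by group⟩
    rw [map_mul, map_inv, hcb]
    have h2 : c g * b ^ 2 = g := by rw [hb]; group
    calc c g * b⁻¹⁻¹ = c g * b ^ 2 * b⁻¹ := by group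
      _ = g * b⁻¹ := by rw [h2]
  · obtain ⟨b, hb⟩ := hsurj (g * (c g)⁻¹)
    simp only at hb
    have hcb : c b = b⁻¹ := by
      apply hinj
      show (c b) ^ 2 = (b⁻¹) ^ 2
      rw [← map_pow, hb, map_mul, map_inv, hc, inv_pow, hb]
      group
    refine ⟨b⁻¹ * g, b, ?_, hcb, by group⟩
    rw [map_mul, map_inv, hcb]
    have h2 : b ^ 2 * c g = g := by rw [hb]; group
    calc b⁻¹⁻¹ * c g = b⁻¹ * (b ^ 2 * c g) := by group
      _ = b⁻¹ * g := by rw [h2]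
end

section
/- Let G be a finite group of odd order, c an automorphism of G with c² = id, and G⁺ its fixed-point subgroup. If H is any subgroup of G containing G⁺, then c(H) = H. -/
/-- Let `G` be a finite group of odd order, `c` an automorphism with `c² = id`, and
`G⁺` its fixed-point subgroup.  If `H` is a subgroup containing `G⁺`, then `c(H) = H`. -/
theorem stmt_2 {G : Type*} [Group G] [Fintype G]
    (hodd : Odd (Fintype.card G))
    (c : G ≃* G) (hc : ∀ g, c (c g) = g)
    (H : Subgroup G) (hle : ∀ g : G, c g = g → g ∈ H) :
    ∀ g : G, g ∈ H ↔ c g ∈ H := by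
  intro g
  obtain ⟨k, hk⟩ := hodd
  set x : G := c g * g⁻¹ with hx
  have hcx : c x = x⁻¹ := by
    simp [hx, hc, mul_inv_rev]
  set y : G := x ^ (k + 1) with hy
  have hy2 : y * y = x := by
    have hcard : x ^ Fintype.card G = 1 := pow_card_eq_one
    calc y * y = x ^ (2 * k + 1 + 1) := by rw [hy, ← pow_add]; ring_nf
    _ = x ^ Fintype.card G * x := by rw [hk, pow_succ]
    _ = x := by rw [hcard, one_mul]
  have hcy : c y = y⁻¹ := by
    rw [hy, map_pow, hcx, inv_pow]
  have ha : c (y * g) = y * g := by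
    rw [map_mul, hcy]
    have : c g = y * (y * g) := by rw [← mul_assoc, hy2, hx, inv_mul_cancel_right]
    rw [this, ← mul_assoc, inv_mul_cancel, one_mul]
  have haH : y * g ∈ H := hle _ ha
  constructor
  · intro hg
    have hyH : y ∈ H := by
      have := H.mul_mem haH (H.inv_mem hg)
      simpa using this
    have : c g = y * (y * g) := by rw [← mul_assoc, hy2, hx, inv_mul_cancel_right]
    rw [this]; exact H.mul_mem hyH haH
  · intro hcg
    have hyinvH : y⁻¹ ∈ H := by
      have hcgy : c g = y * (y * g) := by rw [← mul_assoc, hy2, hx, inv_mul_cancel_right]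
      have : y⁻¹ = (y * g) * (c g)⁻¹ := by rw [hcgy]; group
      rw [this]; exact H.mul_mem haH (H.inv_mem hcg)
    have : g = y⁻¹ * (y * g) := by group
    rw [this]; exact H.mul_mem hyinvH haH
end

section
/- Let G be a finite group of odd order, c an automorphism of G with c² = id, and G⁺ its fixed-point subgroup. If H is a normal subgroup of G containing G⁺, then the quotient G/H is abelian and the automorphism of G/H induced by c is inversion: c(gH) = g⁻¹H for every g ∈ G. -/
/-- Let `G` be a finite group of odd order, `c` an automorphism with `c² = id`, and
`G⁺` its fixed-point subgroup.  If `H` is a normal subgroup containing `G⁺`, then `G/H`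
is abelian and `c` induces inversion on `G/H`; i.e. all commutators lie in `H` and
`c(g)·g ∈ H` (that is `c(g)H = g⁻¹H`) for every `g`. -/
theorem stmt_3 {G : Type*} [Group G] [Fintype G]
    (hodd : Odd (Fintype.card G))
    (c : G ≃* G) (hc : ∀ g, c (c g) = g)
    (H : Subgroup G) [H.Normal] (hle : ∀ g : G, c g = g → g ∈ H) :
    (∀ a b : G, a * b * a⁻¹ * b⁻¹ ∈ H) ∧ (∀ g : G, c g * g ∈ H) := by
  obtain ⟨k, hk⟩ := hodd
  have key : ∀ g : G, c g * g ∈ H := by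
    intro g
    set u : G := g * (c g)⁻¹ with hu
    have hcu : c u = u⁻¹ := by
      simp [hu, hc, mul_comm]
    set x : G := u ^ (k + 1) with hx
    have hx2 : x * x = u := by
      have h1 : u ^ Fintype.card G = 1 := pow_card_eq_one
      calc x * x = u ^ (2 * k + 1) * u := by rw [hx, ← pow_add, ← pow_succ]; ring_nf
        _ = u := by rw [← hk, h1, one_mul]
    have hcx : c x = x⁻¹ := by
      rw [hx, map_pow, hcu, inv_pow]
    set f : G := x⁻¹ * g with hf
    have hcf : c f = f := by
      have : x * c g = x⁻¹ * g := by
        have hg : g = x * x * c g := by rw [hx2, hu]; group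
        calc x * c g = x⁻¹ * (x * x * c g) := by group
          _ = x⁻¹ * g := by rw [← hg]
      rw [hf, map_mul, map_inv, hcx, inv_inv, this]
    have hfH : f ∈ H := hle f hcf
    have hgf : g = x * f := by rw [hf]; group
    have : c g * g = (x⁻¹ * f * x) * f := by
      rw [hgf, map_mul, hcx, hcf]; group
    rw [this]
    exact H.mul_mem (by simpa using Subgroup.Normal.conj_mem ‹H.Normal› f hfH x⁻¹) hfH
  refine ⟨?_, key⟩
  intro a b
  set π := QuotientGroup.mk' H with hπ
  have hinv : ∀ g : G, π (c g) = (π g)⁻¹ := by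
    intro g
    have h1 : π (c g * g) = 1 := (QuotientGroup.eq_one_iff _).2 (key g)
    rw [map_mul] at h1
    exact eq_inv_of_mul_eq_one_left h1
  have hab : (π a)⁻¹ * (π b)⁻¹ = (π b)⁻¹ * (π a)⁻¹ := by
    have h1 : π (c (a * b)) = (π b)⁻¹ * (π a)⁻¹ := by
      rw [hinv, map_mul, mul_inv_rev]
    have h2 : π (c (a * b)) = (π a)⁻¹ * (π b)⁻¹ := by
      rw [map_mul, map_mul, hinv, hinv]
    rw [← h1, h2]
  have : π (a * b * a⁻¹ * b⁻¹) = 1 := by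
    simp only [map_mul, map_inv]
    have := hab
    -- from (πa)⁻¹(πb)⁻¹ = (πb)⁻¹(πa)⁻¹ deduce πa*πb = πb*πa
    have hcomm : π a * π b = π b * π a := by
      have := congrArg (fun z => z⁻¹) hab
      simpa [mul_inv_rev] using this.symm
    rw [hcomm]; group
  exact (QuotientGroup.eq_one_iff _).1 this
end

section
/- Let p be an odd prime, G a finite p-group, c an automorphism of G with c² = id, and G⁺ the fixed-point subgroup. If G⁺ ≠ G, then there exists a subgroup H of G such that G⁺ ≤ H, H is normal in G, [G : H] = p, and c(H) = H. -/
open Subgroup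

section Aux

variable {p : ℕ} [Fact p.Prime] {G : Type*} [Group G] [Fintype G]

lemma aux_mem_frattini_iff {x : G} :
    x ∈ frattini G ↔ ∀ M : Subgroup G, IsCoatom M → x ∈ M := by
  simp [frattini, Order.radical, Subgroup.mem_iInf]

lemma aux_coatom_normal (hG : IsPGroup p G) {M : Subgroup G} (hM : IsCoatom M) :
    M.Normal := by
  have : Group.IsNilpotent G := hG.isNilpotent
  exact Subgroup.NormalizerCondition.normal_of_coatom M normalizerCondition_of_isNilpotent hM

lemma aux_coatom_index (hG : IsPGroup p G) {M : Subgroup G} (hM : IsCoatom M) :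
    M.index = p := by
  haveI hnorm : M.Normal := aux_coatom_normal hG hM
  have hQ : IsPGroup p (G ⧸ M) := hG.to_quotient M
  obtain ⟨n, hn⟩ := IsPGroup.iff_card.mp hQ
  have hindex : M.index = Nat.card (G ⧸ M) := M.index_eq_card
  have hn0 : n ≠ 0 := by
    rintro rfl
    exact hM.1 (Subgroup.index_eq_one.mp (by rw [hindex, hn, pow_zero]))
  have hpdvd : p ∣ Nat.card (G ⧸ M) := by
    rw [hn]
    exact dvd_pow_self p hn0
  obtain ⟨g, hg⟩ := exists_prime_orderOf_dvd_card' (G := G ⧸ M) p hpdvd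
  set N : Subgroup (G ⧸ M) := Subgroup.zpowers g with hN
  have hcardN : Nat.card N = p := by rw [hN, Nat.card_zpowers, hg]
  have hle : M ≤ N.comap (QuotientGroup.mk' M) := by
    intro x hx
    rw [Subgroup.mem_comap]
    have hx1 : (QuotientGroup.mk' M) x = 1 := by
      rw [QuotientGroup.mk'_apply]
      exact (QuotientGroup.eq_one_iff x).mpr hx
    rw [hx1]
    exact one_mem N
  have hne2 : N.comap (QuotientGroup.mk' M) ≠ M := by
    intro heq
    obtain ⟨x, hx⟩ := QuotientGroup.mk'_surjective M g
    have hxN : x ∈ N.comap (QuotientGroup.mk' M) := by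
      simp only [Subgroup.mem_comap, hx]
      exact Subgroup.mem_zpowers g
    have hxM : x ∈ M := heq ▸ hxN
    have hxone : ((x : G ⧸ M)) = 1 := (QuotientGroup.eq_one_iff x).mpr hxM
    rw [QuotientGroup.mk'_apply] at hx
    rw [hxone] at hx
    have horder : orderOf g = 1 := by rw [← hx, orderOf_one]
    rw [hg] at horder
    exact (Fact.out : p.Prime).one_lt.ne' horder
  have hlt : M < N.comap (QuotientGroup.mk' M) := lt_of_le_of_ne hle (Ne.symm hne2)
  have htop : N.comap (QuotientGroup.mk' M) = ⊤ := hM.2 _ hlt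
  have hNtop : N = ⊤ := by
    have h1 : Subgroup.map (QuotientGroup.mk' M) (N.comap (QuotientGroup.mk' M)) ≤ N :=
      Subgroup.map_comap_le _ _
    rw [htop, Subgroup.map_top_of_surjective _ (QuotientGroup.mk'_surjective M)] at h1
    exact top_le_iff.mp h1
  have : Nat.card (G ⧸ M) = p := by
    rw [← hcardN, hNtop]
    exact Subgroup.card_top.symm
  rw [hindex, this]

lemma aux_comm_mem (hG : IsPGroup p G) (a b : G) :
    a * b * a⁻¹ * b⁻¹ ∈ frattini G := by
  rw [aux_mem_frattini_iff]
  intro M hM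
  haveI hnorm : M.Normal := aux_coatom_normal hG hM
  have hcard : Nat.card (G ⧸ M) = p := by
    rw [← M.index_eq_card]; exact aux_coatom_index hG hM
  haveI : IsCyclic (G ⧸ M) := isCyclic_of_prime_card hcard
  letI : CommGroup (G ⧸ M) := IsCyclic.commGroup
  have h1 : (QuotientGroup.mk' M) (a * b * a⁻¹ * b⁻¹) = 1 := by
    have hcomm : (QuotientGroup.mk' M) a * (QuotientGroup.mk' M) b
        = (QuotientGroup.mk' M) b * (QuotientGroup.mk' M) a := mul_comm _ _
    simp only [map_mul, map_inv]
    rw [show ∀ x y : G ⧸ M, x * y * x⁻¹ * y⁻¹ = (x * y) * (y * x)⁻¹ from fun x y => by group]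
    rw [hcomm]
    group
  rw [QuotientGroup.mk'_apply] at h1
  exact (QuotientGroup.eq_one_iff _).mp h1

lemma aux_c_frattini (c : G ≃* G) {x : G} :
    x ∈ frattini G ↔ c x ∈ frattini G := by
  have h := Subgroup.characteristic_iff_comap_eq.mp
    (frattini_characteristic (G := G)) c
  constructor
  · intro hx
    have : x ∈ (frattini G).comap c.toMonoidHom := h.symm ▸ hx
    exact this
  · intro hx
    have : x ∈ (frattini G).comap c.toMonoidHom := hx
    exact h ▸ this

lemma aux_burnside (hodd : Odd p) (hG : IsPGroup p G) (c : G ≃* G)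
    (hc : ∀ g, c (c g) = g) (hne : ∃ g : G, c g ≠ g) :
    ∃ x : G, x⁻¹ * c x ∉ frattini G := by
  classical
  by_contra h
  push_neg at h
  haveI : Finite (Subgroup G) := Finite.of_injective _ SetLike.coe_injective
  set Φ := frattini G with hΦ
  -- the involution on tuples
  have memf : ∀ (t : G → Φ) (g : G), g⁻¹ * c (g * (t g : G)) ∈ Φ := by
    intro t g
    have : g⁻¹ * c (g * (t g : G)) = (g⁻¹ * c g) * c (t g : G) := by
      rw [map_mul]; group
    rw [this]
    exact mul_mem (h g) ((aux_c_frattini c).mp (t g).2)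
  set f : (G → Φ) → (G → Φ) := fun t g => ⟨g⁻¹ * c (g * (t g : G)), memf t g⟩ with hf
  have hinv : Function.Involutive f := by
    intro t
    funext g
    apply Subtype.ext
    show g⁻¹ * c (g * (g⁻¹ * c (g * (t g : G)))) = (t g : G)
    rw [mul_inv_cancel_left, hc, inv_mul_cancel_left]
  -- odd cardinality
  obtain ⟨n, hn⟩ := IsPGroup.iff_card.mp hG
  have hpn : ¬ (2 ∣ p ^ n) := by
    intro hdvd
    have h1 := Nat.odd_iff.mp (hodd.pow (n := n))
    rw [Nat.dvd_iff_mod_eq_zero] at hdvd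
    omega
  have hΦdvd : Fintype.card Φ ∣ p ^ n := by
    rw [← Nat.card_eq_fintype_card, ← hn]
    exact Subgroup.card_subgroup_dvd_card Φ
  have hcardS : ¬ (2 ∣ Fintype.card (G → Φ)) := by
    rw [Fintype.card_fun]
    intro hdvd
    exact hpn (dvd_trans (Nat.Prime.dvd_of_dvd_pow Nat.prime_two hdvd) hΦdvd)
  -- fixed point of the involution
  haveI : Fact (Nat.Prime 2) := ⟨Nat.prime_two⟩
  have hσ : (hinv.toPerm f) ^ 2 ^ 1 = 1 := by
    have h2 : (hinv.toPerm f) * (hinv.toPerm f) = 1 :=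
      Equiv.ext fun a => hinv a
    calc (hinv.toPerm f) ^ 2 ^ 1 = (hinv.toPerm f) * (hinv.toPerm f) := by rw [pow_one, sq]
    _ = 1 := h2
  obtain ⟨t, ht⟩ := Equiv.Perm.exists_fixed_point_of_prime (p := 2) (n := 1) hcardS hσ
  have hft : f t = t := ht
  have hfix : ∀ g : G, c (g * (t g : G)) = g * (t g : G) := by
    intro g
    have h1 : (f t g : G) = (t g : G) := by rw [hft]
    have h2 : g⁻¹ * c (g * (t g : G)) = (t g : G) := h1
    calc c (g * (t g : G)) = g * (g⁻¹ * c (g * (t g : G))) := by group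
    _ = g * (t g : G) := by rw [h2]
  -- generation
  set K : Subgroup G := Subgroup.closure (Set.range fun g : G => g * (t g : G)) with hK
  have hKsup : K ⊔ Φ = ⊤ := by
    rw [eq_top_iff]
    intro g _
    have hgeq : g = (g * (t g : G)) * ((t g : G))⁻¹ := by group
    rw [hgeq]
    exact mul_mem ((le_sup_left : K ≤ K ⊔ Φ) (Subgroup.subset_closure ⟨g, rfl⟩))
      ((le_sup_right : Φ ≤ K ⊔ Φ) (inv_mem (t g).2))
  have hKtop : K = ⊤ := frattini_nongenerating hKsup
  -- c is trivial, contradiction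
  have hle : K ≤ c.toMonoidHom.eqLocus (MonoidHom.id G) := by
    rw [hK]
    apply Subgroup.closure_le _ |>.mpr
    rintro x ⟨g, rfl⟩
    exact hfix g
  obtain ⟨g, hg⟩ := hne
  exact hg (hle (hKtop ▸ Subgroup.mem_top g))

end Aux

/-- Let `p` be an odd prime, `G` a finite `p`-group, `c` an automorphism with `c² = id`,
and `G⁺` the fixed-point subgroup.  If `G⁺ ≠ G`, then there is a subgroup `H` with
`G⁺ ≤ H`, `H` normal in `G`, `[G : H] = p`, and `c(H) = H`. -/
theorem stmt_4 {p : ℕ} [Fact p.Prime] (hodd : Odd p)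
    {G : Type*} [Group G] [Fintype G] (hG : IsPGroup p G)
    (c : G ≃* G) (hc : ∀ g, c (c g) = g)
    (hne : ∃ g : G, c g ≠ g) :
    ∃ H : Subgroup G, (∀ g : G, c g = g → g ∈ H) ∧ H.Normal ∧ H.index = p ∧
      (∀ g : G, g ∈ H ↔ c g ∈ H) := by
  classical
  haveI : Finite (Subgroup G) := Finite.of_injective _ SetLike.coe_injective
  obtain ⟨x₀, hx₀⟩ := aux_burnside hodd hG c hc hne
  set Φ := frattini G with hΦ
  haveI : Φ.Normal := inferInstance
  -- the subgroup W = {x | x⁻¹ c(x) ∈ Φ}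
  set W : Subgroup G :=
    { carrier := {x : G | x⁻¹ * c x ∈ Φ}
      one_mem' := by simpa using one_mem Φ
      mul_mem' := by
        intro a b ha hb
        simp only [Set.mem_setOf_eq] at *
        have heq : (a * b)⁻¹ * c (a * b)
            = (b⁻¹ * (a⁻¹ * c a) * b⁻¹⁻¹) * (b⁻¹ * c b) := by
          rw [map_mul]; group
        rw [heq]
        exact mul_mem (‹Φ.Normal›.conj_mem _ ha b⁻¹) hb
      inv_mem' := by
        intro a ha
        simp only [Set.mem_setOf_eq] at *
        have heq : (a⁻¹)⁻¹ * c a⁻¹ = a * (a⁻¹ * c a)⁻¹ * a⁻¹ := by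
          rw [map_inv]; group
        rw [heq]
        exact ‹Φ.Normal›.conj_mem _ (inv_mem ha) a } with hW
  have hWne : W ≠ ⊤ := by
    intro htop
    exact hx₀ (htop ▸ Subgroup.mem_top x₀ : x₀ ∈ W)
  obtain htop | ⟨M, hM, hWM⟩ := eq_top_or_exists_le_coatom W
  · exact absurd htop hWne
  haveI hnorm : M.Normal := aux_coatom_normal hG hM
  have hidx : M.index = p := aux_coatom_index hG hM
  -- the key fact: x * c x ∈ W for all x
  have hxc : ∀ x : G, x * c x ∈ W := by
    intro x
    show (x * c x)⁻¹ * c (x * c x) ∈ Φ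
    have heq : (x * c x)⁻¹ * c (x * c x)
        = (c x)⁻¹ * x⁻¹ * ((c x)⁻¹)⁻¹ * (x⁻¹)⁻¹ := by
      rw [map_mul, hc]; group
    rw [heq]
    exact aux_comm_mem hG ((c x)⁻¹) (x⁻¹)
  have hMc : ∀ x : G, x ∈ M → c x ∈ M := by
    intro x hx
    have : c x = x⁻¹ * (x * c x) := by group
    rw [this]
    exact mul_mem (inv_mem hx) (hWM (hxc x))
  refine ⟨M, ?_, hnorm, hidx, ?_⟩
  · intro g hg
    apply hWM
    show g⁻¹ * c g ∈ Φ
    rw [hg, inv_mul_cancel]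
    exact one_mem Φ
  · intro g
    constructor
    · exact hMc g
    · intro hg
      have := hMc _ hg
      rwa [hc] at this
end

section
/- Let p be a prime, G a finite group, H a subgroup of index p that is normal in G, and χ an irreducible complex character of G such that χ(g) = 0 for all g ∉ H. Then there exist p distinct irreducible characters ψ₁,…,ψ_p of H such that the restriction χ|_H = ψ₁ + ⋯ + ψ_p and Ind_H^G(ψᵢ) = χ for every i. -/
/-!
Let `V` afford `χ` and let `θ` be a faithful linear character of `G ⧸ H ≅ ℤ/p`. As `χ` vanishes
off `H`, the twist `V ⊗ θ` has the same character as `V`, so `V ≅ V ⊗ θ`; by Schur's lemma such an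
isomorphism can be normalised to `f ∈ GL(V)` with `f ^ p = 1` and `ρ(g) f ρ(g)⁻¹ = θ(g) f`.
The eigenprojections `Pᵢ` of `f` commute with `H` and are permuted cyclically by `G`, so their
images `Wᵢ` are nonzero `H`-representations whose characters `ψᵢ` add up to `χ|_H`.
Again because `χ` vanishes off `H`, `⟨χ|_H, χ|_H⟩_H = p ⟨χ, χ⟩_G = p`, i.e.
`∑ᵢⱼ dim Hom_H(Wⱼ, Wᵢ) = p`; with `p` nonzero diagonal terms this forces the matrix of these
dimensions to be the identity, so the `Wᵢ` are irreducible and pairwise non-isomorphic.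
Finally the `G`-conjugates of `ψᵢ` are the `ψⱼ`, each met `|H|` times, whence `Ind ψᵢ = χ`.
-/

open scoped Classical

/-- `χ` is the character of an irreducible complex representation of `G`. -/
def IsIrredChar (G : Type) [Group G] (χ : G → ℂ) : Prop :=
  ∃ V : FDRep ℂ G, CategoryTheory.Simple V ∧ V.character = χ

/-- The character of `G` induced from the class function `ψ` on the subgroup `H`. -/
noncomputable def indChar {G : Type} [Group G] [Fintype G] (H : Subgroup G)
    (ψ : H → ℂ) (g : G) : ℂ :=
  (Fintype.card H : ℂ)⁻¹ *
    ∑ x : G, if hx : x⁻¹ * g * x ∈ H then ψ ⟨x⁻¹ * g * x, hx⟩ else 0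

open CategoryTheory Module

namespace AddChar

variable {A : Type*} [Monoid A] {n : ℕ} [NeZero n]

def ofPowEqOne {x : A} (hx : x ^ n = 1) : AddChar (ZMod n) A where
  toFun a := x ^ a.val
  map_zero_eq_one' := by rw [ZMod.val_zero, pow_zero]
  map_add_eq_mul' a b := by rw [ZMod.val_add, ← pow_eq_pow_mod _ hx, pow_add]

theorem ofPowEqOne_apply {x : A} (hx : x ^ n = 1) (a : ZMod n) : ofPowEqOne hx a = x ^ a.val :=
  rfl

theorem semiconjBy_ofPowEqOne {k A : Type*} [Field k] [Ring A] [Algebra k A] {u x : A}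
    (hx : x ^ n = 1) (ψ : AddChar (ZMod n) k) {b : ZMod n} (h : SemiconjBy u x (ψ b • x))
    (a : ZMod n) : SemiconjBy u (ofPowEqOne hx a) (ψ (a * b) • ofPowEqOne hx a) := by
  have hψ : ψ (a * b) = ψ b ^ a.val := by
    rw [← map_nsmul_eq_pow, nsmul_eq_mul, ZMod.natCast_zmod_val]
  rw [ofPowEqOne_apply, hψ, ← smul_pow]
  exact h.pow_right _

end AddChar

section SpectralProj

variable {k A : Type*} [Field k] [Ring A] [Algebra k A] {n : ℕ} [NeZero n]
  (ψ : AddChar (ZMod n) k) (F : AddChar (ZMod n) A)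

/-- The projection onto the `ψ i`-eigenspace of `F 1`. -/
noncomputable def spectralProj (i : ZMod n) : A :=
  (n : k)⁻¹ • ∑ a, ψ (-(i * a)) • F a

theorem sum_spectralProj [NeZero (n : k)] (hψ : ψ.IsPrimitive) :
    ∑ i, spectralProj ψ F i = 1 := by
  have hcoeff (a : ZMod n) : ∑ i, ψ (-(i * a)) = if a = 0 then (n : k) else 0 := by
    simpa [ZMod.card, mul_neg] using AddChar.sum_mulShift (-a) hψ
  simp_rw [spectralProj, ← Finset.smul_sum]
  rw [Finset.sum_comm]
  simp_rw [← Finset.sum_smul, hcoeff, ite_smul, zero_smul, Finset.sum_ite_eq', Finset.mem_univ,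
    if_true, AddChar.map_zero_eq_one, smul_smul, inv_mul_cancel₀ (NeZero.ne (n : k)), one_smul]

theorem isIdempotentElem_spectralProj [NeZero (n : k)] (i : ZMod n) :
    IsIdempotentElem (spectralProj ψ F i) := by
  have hrow (a : ZMod n) : (ψ (-(i * a)) • F a) * ∑ b, ψ (-(i * b)) • F b =
      ∑ c, ψ (-(i * c)) • F c := by
    rw [Finset.mul_sum]
    refine Fintype.sum_equiv (Equiv.addLeft a) _ _ fun b => ?_
    rw [smul_mul_smul_comm, ← AddChar.map_add_eq_mul, ← AddChar.map_add_eq_mul]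
    simp only [Equiv.coe_addLeft]
    ring_nf
  simp only [IsIdempotentElem, spectralProj, smul_mul_smul_comm, Finset.sum_mul, hrow,
    Finset.sum_const, Finset.card_univ, ZMod.card, ← Nat.cast_smul_eq_nsmul k, smul_smul]
  rw [mul_assoc, inv_mul_cancel₀ (NeZero.ne (n : k)), mul_one]

theorem semiconjBy_spectralProj {u : A} {b : ZMod n}
    (h : ∀ a, SemiconjBy u (F a) (ψ (a * b) • F a)) (i : ZMod n) :
    SemiconjBy u (spectralProj ψ F i) (spectralProj ψ F (i - b)) := by
  simp only [SemiconjBy, spectralProj, mul_smul_comm, smul_mul_assoc, Finset.mul_sum,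
    Finset.sum_mul]
  congr 1
  refine Finset.sum_congr rfl fun a _ => ?_
  rw [(h a).eq, smul_mul_assoc, smul_smul, ← AddChar.map_add_eq_mul]
  ring_nf

end SpectralProj

theorem Matrix.eq_one_of_diag_ne_zero_of_sum_le_card {ι : Type*} [Fintype ι] [DecidableEq ι]
    (m : Matrix ι ι ℕ) (hdiag : ∀ i, m i i ≠ 0) (hsum : ∑ i, ∑ j, m i j ≤ Fintype.card ι) :
    m = 1 := by
  have hle : ∀ x ∈ (Finset.univ : Finset (ι × ι)), (1 : Matrix ι ι ℕ) x.1 x.2 ≤ m x.1 x.2 := by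
    rintro ⟨i, j⟩ -
    rw [Matrix.one_apply]
    split_ifs with h
    · exact h ▸ Nat.one_le_iff_ne_zero.2 (hdiag i)
    · exact Nat.zero_le _
  have hsum_one : ∑ x : ι × ι, (1 : Matrix ι ι ℕ) x.1 x.2 = Fintype.card ι := by
    rw [Fintype.sum_prod_type]
    simp [Matrix.one_apply]
  have heq := (Finset.sum_eq_sum_iff_of_le hle).1 <| le_antisymm (Finset.sum_le_sum hle)
    (by rw [hsum_one, Fintype.sum_prod_type]; exact hsum)
  ext i j
  exact (heq (i, j) (Finset.mem_univ _)).symm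

theorem MonoidHom.sum_comp_eq_card_ker_smul {G M A : Type*} [Group G] [Fintype G] [Group M]
    [Fintype M] [AddCommMonoid A] (d : G →* M) (hd : Function.Surjective d) (φ : M → A) :
    ∑ x, φ (d x) = Nat.card d.ker • ∑ m, φ m := by
  have hfiber (m : M) : (Finset.univ.filter fun x => d x = m).card = Nat.card d.ker := by
    rw [MonoidHom.card_fiber_eq_of_mem_range d (hd m) ⟨1, map_one d⟩, Nat.card_eq_fintype_card,
      Fintype.card_subtype]
    simp [MonoidHom.mem_ker]
  rw [Finset.sum_comp, Finset.image_univ_of_surjective hd, Finset.smul_sum]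
  simp_rw [hfiber]

theorem Subgroup.exists_surjective_ker_eq_of_index_eq_prime {G : Type*} [Group G]
    {H : Subgroup G} [H.Normal] {p : ℕ} [Fact p.Prime] (hidx : H.index = p) :
    ∃ d : G →* Multiplicative (ZMod p), Function.Surjective d ∧ d.ker = H := by
  let e : G ⧸ H ≃* Multiplicative (ZMod p) := mulEquivOfPrimeCardEq hidx (by simp)
  refine ⟨e.toMonoidHom.comp (QuotientGroup.mk' H),
    e.surjective.comp (QuotientGroup.mk'_surjective H), ?_⟩
  rw [MonoidHom.ker_comp_of_injective _ _ e.injective, QuotientGroup.ker_mk']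

namespace Representation

section Twist

variable {k G V : Type*} [CommSemiring k] [Monoid G] [AddCommMonoid V] [Module k V]

def twist (ρ : Representation k G V) (θ : G →* k) : Representation k G V where
  toFun g := θ g • ρ g
  map_one' := by simp
  map_mul' g h := by rw [map_mul, map_mul, smul_mul_smul_comm]

theorem twist_apply (ρ : Representation k G V) (θ : G →* k) (g : G) :
    ρ.twist θ g = θ g • ρ g :=
  rfl

end Twist

section RangeSubrep

variable {k G V : Type*} [Field k] [Monoid G] [AddCommGroup V] [Module k V]

def rangeSubrep (ρ : Representation k G V) (P : Module.End k V) (hP : ∀ g, Commute (ρ g) P) :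
    Subrepresentation ρ where
  toSubmodule := LinearMap.range P
  apply_mem_toSubmodule g := by
    rintro _ ⟨v, rfl⟩
    exact ⟨ρ g v, (LinearMap.congr_fun (hP g) v).symm⟩

theorem character_rangeSubrep [FiniteDimensional k V] (ρ : Representation k G V)
    {P : Module.End k V} (hP : ∀ g, Commute (ρ g) P) (hP_idem : IsIdempotentElem P) (g : G) :
    (rangeSubrep ρ P hP).toRepresentation.character g = LinearMap.trace k V (ρ g * P) := by
  have hmem (v : V) : (ρ g * P) v ∈ LinearMap.range P := by
    rw [(hP g).eq]
    exact LinearMap.mem_range_self P _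
  rw [← LinearMap.trace_restrict_eq_of_forall_mem _ _ hmem]
  refine congrArg (LinearMap.trace k _) ?_
  ext ⟨_, v, rfl⟩
  change ρ g (P v) = ρ g (P (P v))
  rw [← Module.End.mul_apply P P, hP_idem.eq]

end RangeSubrep

end Representation

namespace FDRep

universe u

section Schur

variable {k : Type u} [Field k] {G : Type u} [Monoid G]

theorem character_twist (V : FDRep k G) (θ : G →* k) (g : G) :
    (FDRep.of (Representation.twist V.ρ θ)).character g = θ g * V.character g :=
  LinearMap.map_smul _ _ _

theorem nontrivial_of_simple (V : FDRep k G) [Simple V] : Nontrivial V := by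
  by_contra h
  rw [not_nontrivial_iff_subsingleton] at h
  exact id_nonzero V (by ext1; ext v; exact Subsingleton.elim _ _)

theorem finrank_end_ne_zero (W : FDRep k G) [Nontrivial W] : finrank k (W ⟶ W) ≠ 0 := by
  have : Nontrivial (W ⟶ W) := ⟨𝟙 W, 0, fun h => by
    obtain ⟨v, hv⟩ := exists_ne (0 : W)
    exact hv (congrArg (fun φ : W ⟶ W => φ.hom.hom.hom v) h)⟩
  exact Module.finrank_pos.ne'

theorem exists_eq_smul_one_of_commute [IsAlgClosed k] {V : FDRep k G} [Simple V]
    (T : Module.End k V) (hT : ∀ g, Commute (V.ρ g) T) : ∃ c : k, T = c • 1 := by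
  let φ : V ⟶ V :=
    ⟨ConcreteCategory.ofHom T, fun g => by ext v; exact (LinearMap.congr_fun (hT g) v).symm⟩
  obtain ⟨c, hc⟩ := endomorphism_simple_eq_smul_id k φ
  exact ⟨c, (congrArg (fun ψ => ψ.hom.hom.hom) hc).symm⟩

end Schur

section Twist

variable {k : Type u} [Field k] [CharZero k] {G : Type u} [Group G] [Fintype G]

theorem finrank_hom_eq_of_character_eq (U : FDRep k G) {V W : FDRep k G}
    (h : V.character = W.character) : finrank k (U ⟶ V) = finrank k (U ⟶ W) := by
  have := invertibleOfNonzero (NeZero.ne (Nat.card G : k))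
  have h1 := scalar_product_char_eq_finrank_equivariant U V
  rw [h, scalar_product_char_eq_finrank_equivariant] at h1
  exact_mod_cast h1.symm

variable [IsAlgClosed k]

theorem simple_of_character_eq {V W : FDRep k G} [Simple V]
    (h : W.character = V.character) : Simple W :=
  (simple_iff_char_is_norm_one W).2 (h ▸ (simple_iff_char_is_norm_one V).1 ‹_›)

theorem nonempty_iso_of_character_eq {V W : FDRep k G} [Simple V]
    (h : W.character = V.character) : Nonempty (V ≅ W) := by
  have := simple_of_character_eq h
  have := invertibleOfNonzero (NeZero.ne (Nat.card G : k))
  have h1 := char_orthonormal V W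
  rw [h, char_orthonormal V V, if_pos ⟨Iso.refl V⟩] at h1
  by_contra hne
  simp [hne] at h1

theorem exists_bijective_semiconjBy_twist {V : FDRep k G} [Simple V] (θ : G →* k)
    (hχ : ∀ g, θ g * V.character g = V.character g) :
    ∃ T : Module.End k V, Function.Bijective T ∧ ∀ g, SemiconjBy (V.ρ g) T (θ g • T) := by
  obtain ⟨e⟩ := nonempty_iso_of_character_eq (W := FDRep.of (Representation.twist V.ρ θ))
    (funext fun g => (character_twist V θ g).trans (hχ g))
  let L : V ≃ₗ[k] V := (isoToLinearEquiv e.symm :)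
  refine ⟨L.toLinearMap, L.bijective, fun g => ?_⟩
  have hconj := Iso.conj_ρ e.symm g
  rw [LinearEquiv.conj_apply] at hconj
  ext v
  change V.ρ g (L v) = θ g • L (V.ρ g v)
  conv_lhs => rw [hconj]
  simp [L, of_ρ', Representation.twist_apply]

theorem exists_pow_eq_one_semiconjBy_twist {V : FDRep k G} [Simple V] (θ : G →* k) {n : ℕ}
    (hn : n ≠ 0) (hθ : ∀ g, θ g ^ n = 1) (hχ : ∀ g, θ g * V.character g = V.character g) :
    ∃ f : Module.End k V, f ^ n = 1 ∧ ∀ g, SemiconjBy (V.ρ g) f (θ g • f) := by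
  obtain ⟨T, hT_bij, hT⟩ := exists_bijective_semiconjBy_twist θ hχ
  have hT_comm (g : G) : Commute (V.ρ g) (T ^ n) := by
    have := (hT g).pow_right n
    rwa [smul_pow, hθ, one_smul] at this
  obtain ⟨c, hc⟩ := exists_eq_smul_one_of_commute (T ^ n) hT_comm
  have hc0 : c ≠ 0 := by
    rintro rfl
    have := nontrivial_of_simple V
    obtain ⟨v, hv⟩ := exists_ne (0 : V)
    apply hv
    apply hT_bij.1.iterate n
    simpa [← Module.End.coe_pow] using LinearMap.congr_fun hc v
  obtain ⟨z, hz⟩ := IsAlgClosed.exists_pow_nat_eq c (Nat.pos_of_ne_zero hn)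
  have hz0 : z ≠ 0 := by rintro rfl; exact hc0 (by simp [← hz, hn])
  refine ⟨z⁻¹ • T, ?_, fun g => ?_⟩
  · rw [smul_pow, hc, smul_smul, inv_pow, hz, inv_mul_cancel₀ hc0, one_smul]
  · rw [smul_comm]
    exact (hT g).smul_right _

end Twist

section ResRange

variable {G : Type} [Group G] (H : Subgroup G) (V : FDRep ℂ G)

noncomputable def resRange (P : Module.End ℂ V) (hP : ∀ h : H, Commute (V.ρ h) P) :
    FDRep ℂ H :=
  FDRep.of (Representation.rangeSubrep (V.ρ.comp H.subtype) P hP).toRepresentation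

variable {H V}

theorem character_resRange {P : Module.End ℂ V} (hP : ∀ h : H, Commute (V.ρ h) P)
    (hP_idem : IsIdempotentElem P) (h : H) :
    (resRange H V P hP).character h = LinearMap.trace ℂ V (V.ρ h * P) :=
  Representation.character_rangeSubrep _ hP hP_idem h

variable {ι : Type*} [Fintype ι] {P : ι → Module.End ℂ V}
  (hP : ∀ i, ∀ h : H, Commute (V.ρ h) (P i)) (hP_idem : ∀ i, IsIdempotentElem (P i))
  (hP_sum : ∑ i, P i = 1)
include hP_idem hP_sum

theorem sum_character_resRange (h : H) :
    ∑ i, (resRange H V (P i) (hP i)).character h = V.character h := by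
  simp_rw [character_resRange _ (hP_idem _), ← map_sum, ← Finset.mul_sum, hP_sum, mul_one]
  rfl

theorem sum_sum_finrank_hom_resRange [Fintype G] [Simple V]
    (hvanish : ∀ g ∉ H, V.character g = 0) :
    ∑ i, ∑ j, finrank ℂ (resRange H V (P j) (hP j) ⟶ resRange H V (P i) (hP i)) = H.index := by
  set W := fun i => resRange H V (P i) (hP i)
  have hG : ∑ g : G, V.character g * V.character g⁻¹ = Nat.card G :=
    (simple_iff_char_is_norm_one V).1 ‹_›
  have hGH : ∑ g : G, V.character g * V.character g⁻¹ =
      ∑ h : H, V.character h * V.character (h⁻¹ : H) := by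
    rw [← Finset.sum_filter_of_ne (p := (· ∈ H)) fun g _ hg => by
      by_contra hgH; exact hg (by rw [hvanish g hgH, zero_mul])]
    exact Finset.sum_subtype _ (by simp) fun g => V.character g * V.character g⁻¹
  have hHG : (Nat.card H : ℂ)⁻¹ * Nat.card G = H.index := by
    rw [← H.index_mul_card, Nat.cast_mul, mul_comm,
      mul_inv_cancel_right₀ (by exact_mod_cast Nat.card_pos.ne')]
  apply Nat.cast_injective (R := ℂ)
  calc (↑(∑ i, ∑ j, finrank ℂ (W j ⟶ W i)) : ℂ)
      = ∑ i, ∑ j, (Nat.card H : ℂ)⁻¹ * ∑ h : H, (W i).character h * (W j).character h⁻¹ := by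
        push_cast
        simp_rw [scalar_product_char_eq_finrank_equivariant]
    _ = (Nat.card H : ℂ)⁻¹ * ∑ h : H, (∑ i, (W i).character h) * ∑ j, (W j).character h⁻¹ := by
        simp_rw [← Finset.mul_sum, Finset.sum_mul_sum]
        congr 1
        exact (Finset.sum_congr rfl fun i _ => Finset.sum_comm).trans Finset.sum_comm
    _ = (Nat.card H : ℂ)⁻¹ * ∑ h : H, V.character h * V.character (h⁻¹ : H) := by
        simp_rw [W, sum_character_resRange hP hP_idem hP_sum]
    _ = H.index := by rw [← hGH, hG, hHG]

end ResRange

section Shift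

variable {p : ℕ} {G : Type} [Group G] {V : FDRep ℂ G}
  {d : G →* Multiplicative (ZMod p)} {P : ZMod p → Module.End ℂ V}
  (hP_conj : ∀ g i, SemiconjBy (V.ρ g) (P i) (P (i - (d g).toAdd)))
include hP_conj

theorem commute_of_semiconjBy_shift (i : ZMod p) (h : d.ker) : Commute (V.ρ h) (P i) := by
  have h_conj := hP_conj h i
  rwa [(MonoidHom.mem_ker).1 h.2, toAdd_one, sub_zero] at h_conj

theorem trace_conj_mul_eq (x g : G) (i : ZMod p) :
    LinearMap.trace ℂ V (V.ρ (x⁻¹ * g * x) * P i) =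
      LinearMap.trace ℂ V (V.ρ g * P (i - (d x).toAdd)) :=
  calc LinearMap.trace ℂ V (V.ρ (x⁻¹ * g * x) * P i)
      = LinearMap.trace ℂ V (V.ρ x⁻¹ * (V.ρ g * P (i - (d x).toAdd) * V.ρ x)) := by
        rw [map_mul V.ρ, map_mul V.ρ, mul_assoc _ (V.ρ x), (hP_conj x i).eq]
        simp only [mul_assoc]
    _ = LinearMap.trace ℂ V (V.ρ g * P (i - (d x).toAdd) * V.ρ x * V.ρ x⁻¹) :=
        LinearMap.trace_mul_comm _ _ _
    _ = LinearMap.trace ℂ V (V.ρ g * P (i - (d x).toAdd)) := by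
        rw [mul_assoc _ (V.ρ x), ← map_mul V.ρ, mul_inv_cancel, map_one, mul_one]

variable [NeZero p]

theorem ne_zero_of_semiconjBy_shift [Nontrivial V] (hd : Function.Surjective d)
    (hP_sum : ∑ i, P i = 1) (i : ZMod p) : P i ≠ 0 := by
  intro hi
  have hzero (j : ZMod p) : P j = 0 := by
    obtain ⟨x, hx⟩ := hd (Multiplicative.ofAdd (i - j))
    have := (hP_conj x i).eq
    rw [hx, toAdd_ofAdd, sub_sub_cancel, hi, mul_zero] at this
    calc P j = P j * V.ρ x * V.ρ x⁻¹ := by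
          rw [mul_assoc, ← map_mul, mul_inv_cancel, map_one, mul_one]
      _ = 0 := by rw [← this, zero_mul]
  simp [hzero] at hP_sum

variable [Fintype G] (hd : Function.Surjective d) (hP_idem : ∀ i, IsIdempotentElem (P i))
  (hP_sum : ∑ i, P i = 1) (hvanish : ∀ g ∉ d.ker, V.character g = 0)
include hd hP_idem hP_sum hvanish

theorem indChar_resRange (i : ZMod p) :
    indChar d.ker (resRange d.ker V (P i) (commute_of_semiconjBy_shift hP_conj i)).character =
      V.character := by
  have hconj_mem (g x : G) : x⁻¹ * g * x ∈ d.ker ↔ g ∈ d.ker := by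
    simp [MonoidHom.mem_ker, mul_comm]
  funext g
  unfold indChar
  by_cases hg : g ∈ d.ker
  · have hterm (x : G) (hx : x⁻¹ * g * x ∈ d.ker) :
        (resRange d.ker V (P i) (commute_of_semiconjBy_shift hP_conj i)).character ⟨_, hx⟩ =
          LinearMap.trace ℂ V (V.ρ g * P (i - (d x).toAdd)) :=
      (character_resRange _ (hP_idem i) _).trans (trace_conj_mul_eq hP_conj x g i)
    have hsum := MonoidHom.sum_comp_eq_card_ker_smul d hd fun m => P (i - m.toAdd)
    rw [Fintype.sum_equiv (Multiplicative.toAdd.trans (Equiv.subLeft i))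
      (fun m => P (i - m.toAdd)) P fun _ => rfl, hP_sum] at hsum
    simp only [hconj_mem, hg, dite_true, hterm]
    rw [← map_sum, ← Finset.mul_sum, hsum, mul_smul_comm, mul_one, map_nsmul, nsmul_eq_mul,
      Fintype.card_eq_nat_card, inv_mul_cancel_left₀ (Nat.cast_ne_zero.2 Nat.card_pos.ne')]
    rfl
  · rw [hvanish g hg]
    simp [hconj_mem, hg]

variable [Simple V]

theorem finrank_hom_resRange (i j : ZMod p) :
    finrank ℂ (resRange d.ker V (P j) (commute_of_semiconjBy_shift hP_conj j) ⟶
      resRange d.ker V (P i) (commute_of_semiconjBy_shift hP_conj i)) =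
      if i = j then 1 else 0 := by
  have := nontrivial_of_simple V
  have hdiag (i : ZMod p) : finrank ℂ
      (resRange d.ker V (P i) (commute_of_semiconjBy_shift hP_conj i) ⟶
        resRange d.ker V (P i) (commute_of_semiconjBy_shift hP_conj i)) ≠ 0 := by
    have : Nontrivial (LinearMap.range (P i)) := Submodule.nontrivial_iff_ne_bot.2 <|
      LinearMap.range_eq_bot.not.2 (ne_zero_of_semiconjBy_shift hP_conj hd hP_sum i)
    exact @finrank_end_ne_zero _ _ _ _ _ this
  have hindex : d.ker.index = Fintype.card (ZMod p) := by
    rw [Subgroup.index_ker, MonoidHom.range_eq_top.2 hd, Subgroup.card_top,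
      Nat.card_eq_fintype_card, Fintype.card_multiplicative]
  have hm := Matrix.eq_one_of_diag_ne_zero_of_sum_le_card (fun i j => finrank ℂ
      (resRange d.ker V (P j) (commute_of_semiconjBy_shift hP_conj j) ⟶
        resRange d.ker V (P i) (commute_of_semiconjBy_shift hP_conj i))) hdiag
    ((sum_sum_finrank_hom_resRange _ hP_idem hP_sum hvanish).trans hindex).le
  exact congrFun (congrFun hm i) j

theorem simple_resRange (i : ZMod p) :
    Simple (resRange d.ker V (P i) (commute_of_semiconjBy_shift hP_conj i)) := by
  rw [simple_iff_end_is_rank_one, finrank_hom_resRange hP_conj hd hP_idem hP_sum hvanish,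
    if_pos rfl]

theorem injective_character_resRange :
    Function.Injective fun i =>
      (resRange d.ker V (P i) (commute_of_semiconjBy_shift hP_conj i)).character := by
  intro i j hij
  have h := finrank_hom_eq_of_character_eq
    (resRange d.ker V (P j) (commute_of_semiconjBy_shift hP_conj j)) hij
  simp only [finrank_hom_resRange hP_conj hd hP_idem hP_sum hvanish] at h
  exact of_not_not fun hne => by simp [hne] at h

end Shift

end FDRep

/-- Let `p` be a prime, `G` a finite group, `H` a normal subgroup of index `p`, and `χ`
an irreducible complex character of `G` vanishing outside `H`.  Then there are `p`
distinct irreducible characters `ψ₁, …, ψ_p` of `H` with `χ|_H = ψ₁ + ⋯ + ψ_p` and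
`Ind_H^G ψᵢ = χ` for each `i`. -/
theorem stmt_10 {p : ℕ} [Fact p.Prime]
    {G : Type} [Group G] [Fintype G]
    (H : Subgroup G) [H.Normal] (hidx : H.index = p)
    (χ : G → ℂ) (hirr : IsIrredChar G χ)
    (hvanish : ∀ g : G, g ∉ H → χ g = 0) :
    ∃ ψ : Fin p → (H → ℂ), Function.Injective ψ ∧
      (∀ i, IsIrredChar H (ψ i)) ∧
      (∀ h : H, χ h = ∑ i, ψ i h) ∧
      (∀ i, indChar H (ψ i) = χ) := by
  obtain ⟨V, hV, rfl⟩ := hirr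
  obtain ⟨d, hd, rfl⟩ := Subgroup.exists_surjective_ker_eq_of_index_eq_prime hidx
  let θ : G →* ℂ := ZMod.stdAddChar.toMonoidHom.comp d
  have hθ_pow (g : G) : θ g ^ p = 1 := by
    have hdg : d g ^ p = 1 := by simpa using pow_card_eq_one' (x := d g)
    rw [← map_pow, MonoidHom.comp_apply, map_pow, hdg, map_one]
  have hθ_char (g : G) : θ g * V.character g = V.character g := by
    by_cases hg : g ∈ d.ker
    · rw [show θ g = 1 by simp [θ, (MonoidHom.mem_ker).1 hg], one_mul]
    · rw [hvanish g hg, mul_zero]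
  obtain ⟨f, hf_pow, hf⟩ :=
    FDRep.exists_pow_eq_one_semiconjBy_twist θ (NeZero.ne p) hθ_pow hθ_char
  set P := spectralProj ZMod.stdAddChar (AddChar.ofPowEqOne hf_pow)
  have hP_conj (g : G) (i : ZMod p) : SemiconjBy (V.ρ g) (P i) (P (i - (d g).toAdd)) :=
    semiconjBy_spectralProj _ _ (AddChar.semiconjBy_ofPowEqOne hf_pow _ (hf g)) i
  have hP_idem (i : ZMod p) : IsIdempotentElem (P i) := isIdempotentElem_spectralProj _ _ i
  have hP_sum : ∑ i, P i = 1 := sum_spectralProj _ _ (ZMod.isPrimitive_stdAddChar p)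
  let W (i : ZMod p) := FDRep.resRange d.ker V (P i) (FDRep.commute_of_semiconjBy_shift hP_conj i)
  let e := (ZMod.finEquiv p).toEquiv
  refine ⟨fun i => (W (e i)).character,
    (FDRep.injective_character_resRange hP_conj hd hP_idem hP_sum hvanish).comp e.injective,
    fun i => ⟨_, FDRep.simple_resRange hP_conj hd hP_idem hP_sum hvanish _, rfl⟩,
    fun h => ?_, fun i => FDRep.indChar_resRange hP_conj hd hP_idem hP_sum hvanish _⟩
  rw [e.sum_comp fun i => (W i).character h]
  exact (FDRep.sum_character_resRange _ hP_idem hP_sum h).symm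
end

section
/- Let p be an odd prime, G a finite p-group, c an automorphism of G with c² = id, and K a proper normal subgroup of G with c(K) = K. Then there exists a subgroup H of G containing K such that [G : H] = p and c(H) = H. -/
/-- Let `p` be an odd prime, `G` a finite `p`-group, `c` an automorphism with `c² = id`,
and `K` a proper normal subgroup with `c(K) = K`.  Then there is a subgroup `H ⊇ K`
with `[G : H] = p` and `c(H) = H`. -/
theorem stmt_11 {p : ℕ} [Fact p.Prime] (hodd : Odd p)
    {G : Type*} [Group G] [Fintype G] (hG : IsPGroup p G)
    (c : G ≃* G) (hc : ∀ g, c (c g) = g)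
    (K : Subgroup G) [K.Normal] (hKne : K ≠ ⊤)
    (hKstab : ∀ g : G, g ∈ K ↔ c g ∈ K) :
    ∃ H : Subgroup G, K ≤ H ∧ H.index = p ∧ (∀ g : G, g ∈ H ↔ c g ∈ H) := by
  classical
  have hp := Fact.out (p := p.Prime)
  -- The quotient `Q = G ⧸ K` is a nontrivial finite `p`-group.
  have hQ : IsPGroup p (G ⧸ K) := hG.to_quotient K
  obtain ⟨g₀, hg₀⟩ : ∃ g : G, g ∉ K := by
    by_contra h
    push_neg at h
    exact hKne ((Subgroup.eq_top_iff' K).2 h)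
  haveI hQnt : Nontrivial (G ⧸ K) :=
    ⟨⟨(g₀ : G ⧸ K), 1, fun h => hg₀ ((QuotientGroup.eq_one_iff g₀).mp h)⟩⟩
  -- Find a maximal (coatom) subgroup `M` of `Q`; it is normal since `Q` is nilpotent.
  have hbotne : (⊥ : Subgroup (G ⧸ K)) ≠ ⊤ := by
    intro h
    obtain ⟨a, b, hab⟩ := hQnt
    have ha : a ∈ (⊥ : Subgroup (G ⧸ K)) := h ▸ Subgroup.mem_top a
    have hb : b ∈ (⊥ : Subgroup (G ⧸ K)) := h ▸ Subgroup.mem_top b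
    rw [Subgroup.mem_bot] at ha hb
    exact hab (ha.trans hb.symm)
  obtain ⟨M, hM, -⟩ :=
    (eq_top_or_exists_le_coatom (⊥ : Subgroup (G ⧸ K))).resolve_left hbotne
  haveI hMnorm : M.Normal := by
    haveI := hQ.isNilpotent
    exact Subgroup.NormalizerCondition.normal_of_coatom M
      normalizerCondition_of_isNilpotent hM
  -- `A = Q ⧸ M` is a nontrivial `p`-group with no proper nontrivial subgroups.
  set A := (G ⧸ K) ⧸ M with hA_def
  have hA : IsPGroup p A := hQ.to_quotient M
  obtain ⟨q₀, hq₀⟩ : ∃ q : G ⧸ K, q ∉ M := by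
    by_contra h
    push_neg at h
    exact hM.1 ((Subgroup.eq_top_iff' M).2 h)
  haveI hAnt : Nontrivial A :=
    ⟨⟨(q₀ : A), 1, fun h => hq₀ ((QuotientGroup.eq_one_iff q₀).mp h)⟩⟩
  have hπsurj : Function.Surjective (QuotientGroup.mk' M) := QuotientGroup.mk'_surjective M
  have hsub : ∀ N : Subgroup A, N = ⊥ ∨ N = ⊤ := by
    intro N
    have hle : M ≤ N.comap (QuotientGroup.mk' M) := by
      intro x hx
      have hx1 : (QuotientGroup.mk' M) x = 1 := by
        rw [← MonoidHom.mem_ker, QuotientGroup.ker_mk']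
        exact hx
      rw [Subgroup.mem_comap, hx1]
      exact one_mem N
    have hNeq : N = Subgroup.map (QuotientGroup.mk' M) (N.comap (QuotientGroup.mk' M)) :=
      (Subgroup.map_comap_eq_self_of_surjective hπsurj N).symm
    rcases hle.lt_or_eq with hlt | heq
    · right
      rw [hNeq, hM.2 _ hlt]
      exact Subgroup.map_top_of_surjective _ hπsurj
    · left
      rw [hNeq, ← heq, Subgroup.map_eq_bot_iff, QuotientGroup.ker_mk']
  -- `A` has cardinality `p`.
  have hcardA : Nat.card A = p := by
    obtain ⟨n, hn, hcard⟩ := (hA.nontrivial_iff_card).mp hAnt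
    have hdvd : p ^ 1 ∣ Nat.card A := by
      rw [hcard, pow_one]
      exact dvd_pow_self p hn.ne'
    obtain ⟨H', hH'⟩ := Sylow.exists_subgroup_card_pow_prime p hdvd
    rw [pow_one] at hH'
    rcases hsub H' with h | h
    · rw [h, Subgroup.card_bot] at hH'
      exact absurd hH'.symm hp.ne_one
    · rw [h] at hH'
      rw [← hH', Subgroup.card_top]
  haveI : IsCyclic A := isCyclic_of_prime_card hcardA
  letI : CommGroup A := IsCyclic.commGroup
  -- The homomorphism `ψ : G → A`.
  set ψ : G →* A := (QuotientGroup.mk' M).comp (QuotientGroup.mk' K) with hψ_def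
  have hψsurj : Function.Surjective ψ :=
    hπsurj.comp (QuotientGroup.mk'_surjective K)
  have hψK : ∀ k ∈ K, ψ k = 1 := by
    intro k hk
    have h1 : (QuotientGroup.mk' K) k = 1 := (QuotientGroup.eq_one_iff k).mpr hk
    rw [hψ_def, MonoidHom.comp_apply, h1, map_one]
  -- The two twisted homomorphisms.
  set χ : G →* A := ψ * ψ.comp c.toMonoidHom with hχ_def
  set χ' : G →* A := ψ * (ψ.comp c.toMonoidHom)⁻¹ with hχ'_def
  have hχ_app : ∀ g, χ g = ψ g * ψ (c g) := fun g => rfl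
  have hχ'_app : ∀ g, χ' g = ψ g * (ψ (c g))⁻¹ := fun g => rfl
  have hχc : ∀ g, χ (c g) = χ g := by
    intro g
    rw [hχ_app, hχ_app, hc g, mul_comm]
  have hχ'c : ∀ g, χ' (c g) = (χ' g)⁻¹ := by
    intro g
    rw [hχ'_app, hχ'_app, hc g, mul_inv_rev, inv_inv, mul_comm]
  -- A general construction: the kernel of a suitable nontrivial homomorphism works.
  have main : ∀ φ : G →* A, (∃ g, φ g ≠ 1) → (∀ k ∈ K, φ k = 1) →
      (∀ g, φ (c g) = 1 ↔ φ g = 1) →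
      ∃ H : Subgroup G, K ≤ H ∧ H.index = p ∧ (∀ g : G, g ∈ H ↔ c g ∈ H) := by
    rintro φ ⟨gw, hgw⟩ hφK hφinv
    refine ⟨φ.ker, fun k hk => hφK k hk, ?_, ?_⟩
    · rw [Subgroup.index_ker]
      have hdvd : Nat.card φ.range ∣ p := by
        have := Subgroup.card_subgroup_dvd_card φ.range
        rwa [hcardA] at this
      rcases (Nat.dvd_prime hp).mp hdvd with h1 | h1
    -- card range = 1 is impossible
      · exfalso
        have hsing : Subsingleton φ.range := Nat.card_eq_one_iff_unique.mp h1 |>.1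
        have : (⟨φ gw, ⟨gw, rfl⟩⟩ : φ.range) = ⟨1, one_mem _⟩ := Subsingleton.elim _ _
        exact hgw (Subtype.ext_iff.mp this)
      · exact h1
    · intro g
      simp only [MonoidHom.mem_ker]
      constructor
      · intro hg
        exact (hφinv g).mpr hg
      · intro hg
        exact (hφinv g).mp hg
  -- At least one of `χ`, `χ'` is nontrivial.
  have key : (∃ g, χ g ≠ 1) ∨ (∃ g, χ' g ≠ 1) := by
    by_contra h
    push_neg at h
    obtain ⟨h1, h2⟩ := h
    have hone : ∀ a : A, a = 1 := by
      intro a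
      obtain ⟨g, rfl⟩ := hψsurj a
      have e1 : ψ g * ψ (c g) = 1 := by rw [← hχ_app]; exact h1 g
      have e2 : ψ g * (ψ (c g))⁻¹ = 1 := by rw [← hχ'_app]; exact h2 g
      have e4 : ψ (c g) = ψ g := by rwa [mul_inv_eq_one, eq_comm] at e2
      rw [e4] at e1
      have hsq : ψ g ^ 2 = 1 := by rw [pow_two]; exact e1
      have hd2 : orderOf (ψ g) ∣ 2 := orderOf_dvd_of_pow_eq_one hsq
      have hdp : orderOf (ψ g) ∣ p := by
        have := orderOf_dvd_natCard (ψ g)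
        rwa [hcardA] at this
      rcases (Nat.dvd_prime Nat.prime_two).mp hd2 with ho | ho
      · exact orderOf_eq_one_iff.mp ho
      · exfalso
        rw [ho] at hdp
        have hpm : p % 2 = 1 := Nat.odd_iff.mp hodd
        omega
    obtain ⟨a, b, hab⟩ := hAnt
    exact hab ((hone a).trans (hone b).symm)
  rcases key with ⟨gw, hgw⟩ | ⟨gw, hgw⟩
  · refine main χ ⟨gw, hgw⟩ ?_ ?_
    · intro k hk
      rw [hχ_app, hψK k hk, hψK (c k) ((hKstab k).mp hk), one_mul]
    · intro g
      rw [hχc g]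
  · refine main χ' ⟨gw, hgw⟩ ?_ ?_
    · intro k hk
      rw [hχ'_app, hψK k hk, hψK (c k) ((hKstab k).mp hk), inv_one, one_mul]
    · intro g
      rw [hχ'c g, inv_eq_one]
end
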